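/- arXiv:1909.01782 — 7 statements merged into one kernel-verified Lean document; each statement's English description precedes it below -/
import Mathlib

section
/- Let X_t be a stationary AR(1) process with parameter ρ ∈ (-1,1), innovations of variance σ²_ν, so that Cov(X_t, X_{t+h}) = ρ^{|h|} σ²_ν/(1-ρ²). With T even, let ∇X = (2/T)∑_{t=T/2+1}^{T} X_t − (2/T)∑_{t=1}^{T/2} X_t. Then E[(∇X)²] = (4 σ²_ν)/(T²(1-ρ)²) · [T − 2(ρ/(1-ρ²))(3 − ρ^{T/2})(1 − ρ^{T/2})]. -/
/-!
Expanding the square, `E[(∇X)²] = (2/T)² σ²_ν/(1-ρ²) (K(H,H) - 2 K(H,L) + K(L,L))`, where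
`K(A,B) = ∑_{t ∈ A, s ∈ B} ρ^|t-s|` and `L`, `H` are the two halves of `{1, …, T = 2m}`.
The kernel is shift invariant, so `K(H,H) = K(L,L)`, and induction on `m` gives
`(1-ρ)² K(L,L) = m(1-ρ²) - 2ρ(1-ρ^m)`; the cross block factorizes as
`K(H,L) = ρ (∑_{i<m} ρ^i)² = ρ (1-ρ^m)²/(1-ρ)²`.
-/

open MeasureTheory ProbabilityTheory Finset

section SecondMoments

variable {Ω : Type*} [MeasurableSpace Ω] {μ : Measure Ω}

theorem integral_sum_mul_sum {ι : Type*} {X : ι → Ω → ℝ} (hX : ∀ i, MemLp (X i) 2 μ)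
    (A B : Finset ι) :
    ∫ ω, (∑ i ∈ A, X i ω) * (∑ j ∈ B, X j ω) ∂μ
      = ∑ i ∈ A, ∑ j ∈ B, ∫ ω, X i ω * X j ω ∂μ := by
  have hXX : ∀ i j, Integrable (fun ω ↦ X i ω * X j ω) μ := fun i j ↦
    (hX i).integrable_mul (hX j)
  simp_rw [sum_mul_sum]
  rw [integral_finsetSum A fun i _ ↦ integrable_finsetSum B fun j _ ↦ hXX i j]
  exact sum_congr rfl fun i _ ↦ integral_finsetSum B fun j _ ↦ hXX i j

theorem integral_sub_sq {F G : Ω → ℝ} (hF : MemLp F 2 μ) (hG : MemLp G 2 μ) :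
    ∫ ω, (F ω - G ω) ^ 2 ∂μ
      = ∫ ω, F ω * F ω ∂μ - 2 * ∫ ω, F ω * G ω ∂μ + ∫ ω, G ω * G ω ∂μ := by
  have hFF : Integrable (fun ω ↦ F ω * F ω) μ := hF.integrable_mul hF
  have hFG : Integrable (fun ω ↦ 2 * (F ω * G ω)) μ := (hF.integrable_mul hG).const_mul 2
  have hGG : Integrable (fun ω ↦ G ω * G ω) μ := hG.integrable_mul hG
  have hFFG : Integrable (fun ω ↦ F ω * F ω - 2 * (F ω * G ω)) μ := hFF.sub hFG
  calc ∫ ω, (F ω - G ω) ^ 2 ∂μ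
        = ∫ ω, F ω * F ω - 2 * (F ω * G ω) + G ω * G ω ∂μ := by congr with ω; ring
    _ = _ := by rw [integral_add hFFG hGG, integral_sub hFF hFG, integral_const_mul]

end SecondMoments

theorem Finset.sum_Icc_eq_sum_range {M : Type*} [AddCommMonoid M] (f : ℕ → M) (a b : ℕ) :
    ∑ t ∈ Icc a b, f t = ∑ i ∈ range (b + 1 - a), f (a + i) := by
  rw [← Ico_add_one_right_eq_Icc, sum_Ico_eq_sum_range]

section GeometricKernel

variable (ρ : ℝ)

def powDistSum (A B : Finset ℕ) : ℝ := ∑ t ∈ A, ∑ s ∈ B, ρ ^ Nat.dist t s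

theorem sum_range_pow_sub (m : ℕ) :
    ∑ j ∈ range m, ρ ^ (m - j) = ρ * ∑ j ∈ range m, ρ ^ j := by
  rw [mul_sum, ← sum_range_reflect]
  refine sum_congr rfl fun j hj ↦ ?_
  rw [← pow_succ']
  congr 1
  have := mem_range.mp hj
  omega

theorem one_sub_sq_mul_powDistSum_range (m : ℕ) :
    (1 - ρ) ^ 2 * powDistSum ρ (range m) (range m)
      = m * (1 - ρ ^ 2) - 2 * ρ * (1 - ρ ^ m) := by
  induction m with
  | zero => simp [powDistSum]
  | succ m ih =>
    have hdist : ∀ i ∈ range m, ρ ^ Nat.dist i m = ρ ^ (m - i) := fun i hi ↦ by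
      rw [Nat.dist_eq_sub_of_le (mem_range.mp hi).le]
    simp only [powDistSum, sum_range_succ, sum_add_distrib, Nat.dist_self, pow_zero] at ih ⊢
    simp only [Nat.dist_comm m, sum_congr rfl hdist, sum_range_pow_sub]
    push_cast
    linear_combination ih + 2 * ρ * (1 - ρ) * mul_neg_geom_sum ρ m

theorem sum_range_sum_range_pow_dist_add_left (m : ℕ) :
    ∑ i ∈ range m, ∑ j ∈ range m, ρ ^ Nat.dist (m + i) j
      = ρ * (∑ i ∈ range m, ρ ^ i) ^ 2 := by
  have hdist : ∀ i, ∀ j ∈ range m, ρ ^ Nat.dist (m + i) j = ρ ^ i * ρ ^ (m - j) := by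
    intro i j hj
    have := mem_range.mp hj
    rw [Nat.dist_eq_sub_of_le_right (by omega), ← pow_add]
    congr 1
    omega
  simp_rw [sum_congr rfl (hdist _), ← mul_sum, ← sum_mul, sum_range_pow_sub]
  ring

theorem one_sub_sq_mul_powDistSum_halves (m : ℕ) :
    (1 - ρ) ^ 2 * (powDistSum ρ (Icc (m + 1) (m + m)) (Icc (m + 1) (m + m))
        - 2 * powDistSum ρ (Icc (m + 1) (m + m)) (Icc 1 m) + powDistSum ρ (Icc 1 m) (Icc 1 m))
      = 2 * (m * (1 - ρ ^ 2) - ρ * (3 - ρ ^ m) * (1 - ρ ^ m)) := by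
  have hcross : ∀ i j, Nat.dist (m + 1 + i) (1 + j) = Nat.dist (m + i) j := fun i j ↦ by
    rw [show m + 1 + i = 1 + (m + i) by ring, Nat.dist_add_add_left]
  have hLL := one_sub_sq_mul_powDistSum_range ρ m
  simp only [powDistSum, sum_Icc_eq_sum_range, show m + m + 1 - (m + 1) = m by omega,
    show m + 1 - 1 = m by omega, Nat.dist_add_add_left, hcross,
    sum_range_sum_range_pow_dist_add_left] at hLL ⊢
  linear_combination 2 * hLL
    - 2 * ρ * ((1 - ρ) * ∑ i ∈ range m, ρ ^ i + (1 - ρ ^ m)) * mul_neg_geom_sum ρ m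

end GeometricKernel

theorem integral_sum_mul_sum_eq_powDistSum {Ω : Type*} [MeasurableSpace Ω] {μ : Measure Ω}
    {X : ℕ → Ω → ℝ} {ρ c : ℝ} {S A B : Finset ℕ} (hX : ∀ t, MemLp (X t) 2 μ)
    (hcov : ∀ t ∈ S, ∀ s ∈ S, ∫ ω, X t ω * X s ω ∂μ = ρ ^ Nat.dist t s * c)
    (hA : A ⊆ S) (hB : B ⊆ S) :
    ∫ ω, (∑ t ∈ A, X t ω) * (∑ s ∈ B, X s ω) ∂μ = powDistSum ρ A B * c := by
  rw [integral_sum_mul_sum hX, powDistSum, sum_mul]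
  refine sum_congr rfl fun t ht ↦ ?_
  rw [sum_mul]
  exact sum_congr rfl fun s hs ↦ hcov t (hA ht) s (hB hs)

theorem AR1_nabla_second_moment_general {Ω : Type*} [MeasurableSpace Ω] (P : Measure Ω)
    (X : ℕ → Ω → ℝ) (ρ σν2 : ℝ) (hρ : |ρ| < 1)
    (T : ℕ) (hTeven : Even T)
    (hL2 : ∀ t, MemLp (X t) 2 P)
    (hcov : ∀ t ∈ Finset.Icc 1 T, ∀ s ∈ Finset.Icc 1 T,
      ∫ ω, X t ω * X s ω ∂P = ρ ^ (Nat.dist t s) * σν2 / (1 - ρ ^ 2)) :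
    ∫ ω, ((2 / (T : ℝ)) * ∑ t ∈ Finset.Icc (T / 2 + 1) T, X t ω
        - (2 / (T : ℝ)) * ∑ t ∈ Finset.Icc 1 (T / 2), X t ω) ^ 2 ∂P
      = (4 * σν2) / ((T : ℝ) ^ 2 * (1 - ρ) ^ 2)
        * ((T : ℝ) - 2 * (ρ / (1 - ρ ^ 2)) * (3 - ρ ^ (T / 2)) * (1 - ρ ^ (T / 2))) := by
  obtain ⟨m, rfl⟩ := hTeven
  rw [show (m + m) / 2 = m by omega]
  set H := Icc (m + 1) (m + m)
  set L := Icc 1 m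
  have hcov' : ∀ t ∈ Icc 1 (m + m), ∀ s ∈ Icc 1 (m + m),
      ∫ ω, X t ω * X s ω ∂P = ρ ^ Nat.dist t s * (σν2 / (1 - ρ ^ 2)) := fun t ht s hs ↦
    (hcov t ht s hs).trans (mul_div_assoc _ _ _)
  have hH : H ⊆ Icc 1 (m + m) := Icc_subset_Icc (by omega) le_rfl
  have hL : L ⊆ Icc 1 (m + m) := Icc_subset_Icc le_rfl (by omega)
  obtain ⟨hρ_gt, hρ_lt⟩ := abs_lt.mp hρ
  have hρ1 : 1 - ρ ≠ 0 := by linarith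
  have hρ2 : 1 - ρ ^ 2 ≠ 0 := by nlinarith
  have hK : powDistSum ρ H H - 2 * powDistSum ρ H L + powDistSum ρ L L
      = 2 * (m * (1 - ρ ^ 2) - ρ * (3 - ρ ^ m) * (1 - ρ ^ m)) / (1 - ρ) ^ 2 := by
    rw [eq_div_iff (pow_ne_zero 2 hρ1), mul_comm]
    exact one_sub_sq_mul_powDistSum_halves ρ m
  calc _ = (2 / ((m + m : ℕ) : ℝ)) ^ 2 * ∫ ω, (∑ t ∈ H, X t ω - ∑ t ∈ L, X t ω) ^ 2 ∂P := by
        rw [← integral_const_mul]; congr with ω; ring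
    _ = (2 / ((m + m : ℕ) : ℝ)) ^ 2 * ((powDistSum ρ H H - 2 * powDistSum ρ H L
          + powDistSum ρ L L) * (σν2 / (1 - ρ ^ 2))) := by
        rw [integral_sub_sq (memLp_finsetSum H fun t _ ↦ hL2 t)
            (memLp_finsetSum L fun t _ ↦ hL2 t),
          integral_sum_mul_sum_eq_powDistSum hL2 hcov' hH hH,
          integral_sum_mul_sum_eq_powDistSum hL2 hcov' hH hL,
          integral_sum_mul_sum_eq_powDistSum hL2 hcov' hL hL]
        ring
    _ = _ := by
        rw [hK]
        push_cast
        field_simp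
        ring

/-- For a mean-zero stationary AR(1) process with autocovariance
`Cov(X t, X s) = ρ^|t-s| σν²/(1-ρ²)` and `T` even, the post-minus-pre difference of
half-sample averages `∇X` satisfies the exact second-moment formula
`E[(∇X)²] = (4σν²)/(T²(1-ρ)²) [T - 2 (ρ/(1-ρ²)) (3 - ρ^{T/2})(1 - ρ^{T/2})]`. -/
theorem AR1_nabla_second_moment {Ω : Type*} [MeasurableSpace Ω] (P : Measure Ω)
    [IsProbabilityMeasure P] (X : ℕ → Ω → ℝ) (ρ σν2 : ℝ) (hρ : |ρ| < 1)
    (T : ℕ) (hT : 2 ≤ T) (hTeven : Even T)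
    (hL2 : ∀ t, MemLp (X t) 2 P)
    (hmean : ∀ t ∈ Finset.Icc 1 T, ∫ ω, X t ω ∂P = 0)
    (hcov : ∀ t ∈ Finset.Icc 1 T, ∀ s ∈ Finset.Icc 1 T,
      ∫ ω, X t ω * X s ω ∂P = ρ ^ (Nat.dist t s) * σν2 / (1 - ρ ^ 2)) :
    ∫ ω, ((2 / (T : ℝ)) * ∑ t ∈ Finset.Icc (T / 2 + 1) T, X t ω
        - (2 / (T : ℝ)) * ∑ t ∈ Finset.Icc 1 (T / 2), X t ω) ^ 2 ∂P
      = (4 * σν2) / ((T : ℝ) ^ 2 * (1 - ρ) ^ 2)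
        * ((T : ℝ) - 2 * (ρ / (1 - ρ ^ 2)) * (3 - ρ ^ (T / 2)) * (1 - ρ ^ (T / 2))) :=
  AR1_nabla_second_moment_general P X ρ σν2 hρ T hTeven hL2 hcov
end

section
/- Under the sampling assumption (i.i.d. (D_j, μ_j, ε's, α's) independent of λ, finite variances, P(D_j=1)=c ∈ (0,1)) and the parallel trends assumption E[∇λ](μ₁ᵉ − μ₀ᵉ) = 0 and E[∇ε_j | D_j] = 0, the DID estimator in the linear factor model satisfies α̂ − α = ∇λ(μ₁ᵉ − μ₀ᵉ) + o_p(1) as N → ∞. In particular, α̂ is not consistent for α when (μ₁ᵉ − μ₀ᵉ)' E[(∇λ)'(∇λ)](μ₁ᵉ − μ₀ᵉ) > 0. -/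
open MeasureTheory ProbabilityTheory Filter Finset Topology

/-!
Within each treatment arm, the sample means of the loadings, of `∇ε` and of the treatment
effects converge almost surely to their conditional expectations: apply the strong law to the
i.i.d. units, both to the arm-restricted sums and to the arm sizes, whose frequency tends to
`P(D = w) > 0`. The common shock `∇γ` enters both arms alike and cancels as soon as both arms are
nonempty, which eventually holds almost surely, and `∇λ` enters linearly. Hence
`α̂ → α + ∇λ (μ₁ᵉ - μ₀ᵉ)` almost surely, so in probability. If also `α̂ → α` in probability, the
two limits agree a.s., so `∇λ (μ₁ᵉ - μ₀ᵉ) = 0` a.s. and its second moment vanishes.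
-/

-- An empty arm has mean `0` (division by zero), so shifts cancel only when both arms are nonempty.
noncomputable def groupMean (D : ℕ → Bool) (w : Bool) (N : ℕ) (y : ℕ → ℝ) : ℝ :=
  (∑ j ∈ (range N).filter (fun j => D j = w), y j) /
    ((range N).filter (fun j => D j = w)).card

noncomputable def didEstimator (D : ℕ → Bool) (N : ℕ) (y : ℕ → ℝ) : ℝ :=
  groupMean D true N y - groupMean D false N y

section groupMean

variable (D : ℕ → Bool) (w : Bool) (N : ℕ)

lemma groupMean_add (y z : ℕ → ℝ) :
    groupMean D w N (fun j => y j + z j) = groupMean D w N y + groupMean D w N z := by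
  simp only [groupMean, sum_add_distrib, add_div]

lemma groupMean_const_mul (a : ℝ) (y : ℕ → ℝ) :
    groupMean D w N (fun j => a * y j) = a * groupMean D w N y := by
  simp only [groupMean, ← mul_sum, mul_div_assoc]

lemma groupMean_sum {ι : Type*} (s : Finset ι) (y : ι → ℕ → ℝ) :
    groupMean D w N (fun j => ∑ i ∈ s, y i j) = ∑ i ∈ s, groupMean D w N (y i) := by
  simp only [groupMean, sum_div]
  exact sum_comm

variable {D w N} in
lemma groupMean_congr {y z : ℕ → ℝ} (h : ∀ j, D j = w → y j = z j) :
    groupMean D w N y = groupMean D w N z := by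
  unfold groupMean
  rw [sum_congr rfl fun j hj => h j (mem_filter.1 hj).2]

variable {D w N} in
lemma groupMean_const (a : ℝ) (h : ∃ j < N, D j = w) : groupMean D w N (fun _ => a) = a := by
  obtain ⟨j, hjN, hj⟩ := h
  have hcard : (((range N).filter (fun j => D j = w)).card : ℝ) ≠ 0 :=
    Nat.cast_ne_zero.2 (card_ne_zero_of_mem (mem_filter.2 ⟨mem_range.2 hjN, hj⟩))
  rw [groupMean, sum_const, nsmul_eq_mul, mul_div_cancel_left₀ _ hcard]

lemma groupMean_zero : groupMean D w N (fun _ => 0) = 0 := by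
  simp [groupMean]

end groupMean

lemma didEstimator_const_add {D : ℕ → Bool} {N : ℕ} (a : ℝ) (y : ℕ → ℝ)
    (h : ∀ w, ∃ j < N, D j = w) : didEstimator D N (fun j => a + y j) = didEstimator D N y := by
  simp only [didEstimator, groupMean_add, groupMean_const a (h _)]
  ring

lemma didEstimator_factor_outcome {F : Type*} [Fintype F] (D : ℕ → Bool) (N : ℕ) (Λ : F → ℝ)
    (M : ℕ → F → ℝ) (E A : ℕ → ℝ) :
    didEstimator D N (fun j => ∑ f, Λ f * M j f + E j + if D j then A j else 0) =
      ∑ f, Λ f * (groupMean D true N (M · f) - groupMean D false N (M · f)) +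
        (groupMean D true N E - groupMean D false N E) + groupMean D true N A := by
  have htrue : groupMean D true N (fun j => if D j then A j else 0) = groupMean D true N A :=
    groupMean_congr fun j hj => by simp [hj]
  have hfalse : groupMean D false N (fun j => if D j then A j else 0) = 0 :=
    (groupMean_congr fun j hj => by simp [hj]).trans (groupMean_zero D false N)
  simp only [didEstimator, groupMean_add, groupMean_sum, groupMean_const_mul, htrue, hfalse,
    mul_sub, sum_sub_distrib]
  ring

lemma measurable_groupMean {Ω : Type*} [MeasurableSpace Ω] {D : ℕ → Ω → Bool}
    {y : ℕ → Ω → ℝ} (hD : ∀ j, Measurable (D j)) (hy : ∀ j, Measurable (y j)) (w : Bool)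
    (N : ℕ) : Measurable fun ω => groupMean (fun j => D j ω) w N (fun j => y j ω) := by
  simp only [groupMean, sum_filter, natCast_card_filter]
  refine .div (measurable_sum _ fun j _ => .ite ?_ (hy j) measurable_const)
    (measurable_sum _ fun j _ => .ite ?_ measurable_const measurable_const) <;>
  exact hD j (measurableSet_singleton w)

lemma measurable_didEstimator {Ω : Type*} [MeasurableSpace Ω] {D : ℕ → Ω → Bool}
    {y : ℕ → Ω → ℝ} (hD : ∀ j, Measurable (D j)) (hy : ∀ j, Measurable (y j)) (N : ℕ) :
    Measurable fun ω => didEstimator (fun j => D j ω) N (fun j => y j ω) :=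
  (measurable_groupMean hD hy true N).sub (measurable_groupMean hD hy false N)

lemma integral_indicator_eq_measureReal_mul_integral_cond {Ω : Type*} [MeasurableSpace Ω]
    {μ : Measure Ω} [IsFiniteMeasure μ] {s : Set Ω} (hs : MeasurableSet s) (Z : Ω → ℝ) :
    ∫ ω, s.indicator Z ω ∂μ = μ.real s * ∫ ω, Z ω ∂μ[|s] := by
  rw [integral_indicator hs, ProbabilityTheory.cond, integral_smul_measure, smul_eq_mul,
    ENNReal.toReal_inv, ← mul_assoc]
  by_cases h : μ s = 0
  · simp [Measure.restrict_eq_zero.2 h]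
  · rw [measureReal_def, mul_inv_cancel₀ (ENNReal.toReal_ne_zero.2 ⟨h, measure_ne_top μ s⟩),
      one_mul]

lemma tendstoInMeasure_sub_iff {α ι E : Type*} [MeasurableSpace α] {μ : Measure α}
    [SeminormedAddCommGroup E] {l : Filter ι} {f : ι → α → E} {g : α → E} :
    TendstoInMeasure μ (fun n x => f n x - g x) l (fun _ => 0) ↔ TendstoInMeasure μ f l g := by
  simp only [TendstoInMeasure, edist_zero_right, ← edist_eq_enorm_sub]

lemma MeasureTheory.TendstoInMeasure.of_eqOn_of_ae_eventually_mem {α ι E : Type*}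
    [MeasurableSpace α] {μ : Measure α} [IsFiniteMeasure μ] [EDist E] {l : Filter ι}
    [l.IsCountablyGenerated] {f g : ι → α → E} {h : α → E} {s : ι → Set α}
    (hs : ∀ n, MeasurableSet (s n)) (hmem : ∀ᵐ x ∂μ, ∀ᶠ n in l, x ∈ s n)
    (hfg : ∀ n, Set.EqOn (f n) (g n) (s n)) (hg : TendstoInMeasure μ g l h) :
    TendstoInMeasure μ f l h := by
  intro ε hε
  have hcompl : Tendsto (fun n => μ (s n)ᶜ) l (𝓝 0) := by
    simpa using tendsto_measure_of_ae_tendsto_indicator_of_isFiniteMeasure l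
      MeasurableSet.empty (fun n => (hs n).compl)
      (hmem.mono fun x hx => hx.mono fun n hn => by simpa using hn)
  refine tendsto_of_tendsto_of_tendsto_of_le_of_le tendsto_const_nhds
    (by simpa using hcompl.add (hg ε hε)) (fun _ => zero_le) fun n => ?_
  refine (measure_mono fun x hx => ?_).trans (measure_union_le _ _)
  by_cases hxs : x ∈ s n
  · exact Or.inr (by simpa [← hfg n hxs] using hx)
  · exact Or.inl hxs

section StrongLaw

variable {Ω β : Type*} [MeasurableSpace Ω] {P : Measure Ω} [MeasurableSpace β]
  {X : ℕ → Ω → β}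

lemma strong_law_ae_comp (hind : iIndepFun X P)
    (hident : ∀ j, IdentDistrib (X j) (X 0) P P) {g : β → ℝ} (hg : Measurable g)
    (hint : Integrable (fun ω => g (X 0 ω)) P) :
    ∀ᵐ ω ∂P, Tendsto (fun N : ℕ => (∑ j ∈ range N, g (X j ω)) / N) atTop
      (𝓝 (∫ ω, g (X 0 ω) ∂P)) :=
  strong_law_ae_real (fun j => g ∘ X j) hint
    (fun _ _ hij => (hind.indepFun hij).comp hg hg) fun j => (hident j).comp hg

lemma ae_tendsto_card_filter_div [IsProbabilityMeasure P] (hX : ∀ j, Measurable (X j))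
    (hind : iIndepFun X P) (hident : ∀ j, IdentDistrib (X j) (X 0) P P) {d : β → Bool}
    (hd : Measurable d) (w : Bool) :
    ∀ᵐ ω ∂P, Tendsto
      (fun N : ℕ => (((range N).filter (fun j => d (X j ω) = w)).card : ℝ) / N) atTop
      (𝓝 (P.real {ω | d (X 0 ω) = w})) := by
  have hs : MeasurableSet {x : β | d x = w} := hd (measurableSet_singleton w)
  have hlln := strong_law_ae_comp hind hident (measurable_const.indicator hs)
    (((integrable_const (1 : ℝ)).indicator hs).comp_measurable (hX 0))
  have hint : ∫ ω, {x | d x = w}.indicator (fun _ => (1 : ℝ)) (X 0 ω) ∂P =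
      P.real {ω | d (X 0 ω) = w} :=
    integral_indicator_one ((hX 0) hs)
  rw [hint] at hlln
  simpa [Set.indicator_apply, sum_boole] using hlln

lemma ae_eventually_forall_exists_eq [IsProbabilityMeasure P] (hX : ∀ j, Measurable (X j))
    (hind : iIndepFun X P) (hident : ∀ j, IdentDistrib (X j) (X 0) P P) {d : β → Bool}
    (hd : Measurable d) (hw : ∀ w, P {ω | d (X 0 ω) = w} ≠ 0) :
    ∀ᵐ ω ∂P, ∀ᶠ N in atTop, ∀ w, ∃ j < N, d (X j ω) = w := by
  filter_upwards [ae_all_iff.2 fun w => ae_tendsto_card_filter_div hX hind hident hd w]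
    with ω hfreq
  have hexists : ∀ w, ∃ j, d (X j ω) = w := by
    intro w
    by_contra! hnone
    have hzero : Tendsto
        (fun N : ℕ => (((range N).filter (fun j => d (X j ω) = w)).card : ℝ) / N) atTop (𝓝 0) := by
      simp [filter_false_of_mem fun j _ => hnone j]
    exact (measureReal_ne_zero_iff).2 (hw w) (tendsto_nhds_unique (hfreq w) hzero)
  exact eventually_all.2 fun w =>
    (eventually_gt_atTop (hexists w).choose).mono fun N hN => ⟨_, hN, (hexists w).choose_spec⟩

lemma ae_tendsto_groupMean [IsProbabilityMeasure P] (hX : ∀ j, Measurable (X j))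
    (hind : iIndepFun X P) (hident : ∀ j, IdentDistrib (X j) (X 0) P P) {d : β → Bool}
    (hd : Measurable d) {w : Bool} (hw : P {ω | d (X 0 ω) = w} ≠ 0) {g : β → ℝ}
    (hg : Measurable g) (hint : Integrable (fun ω => g (X 0 ω)) P) :
    ∀ᵐ ω ∂P, Tendsto (fun N => groupMean (fun j => d (X j ω)) w N (fun j => g (X j ω))) atTop
      (𝓝 (∫ ω, g (X 0 ω) ∂P[|{ω | d (X 0 ω) = w}])) := by
  have hs : MeasurableSet {x : β | d x = w} := hd (measurableSet_singleton w)
  have hint_s : ∫ ω, {x | d x = w}.indicator g (X 0 ω) ∂P =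
      P.real {ω | d (X 0 ω) = w} * ∫ ω, g (X 0 ω) ∂P[|{ω | d (X 0 ω) = w}] := by
    simp_rw [← Set.indicator_comp_right (X 0)]
    exact integral_indicator_eq_measureReal_mul_integral_cond ((hX 0) hs) _
  have hsum := strong_law_ae_comp hind hident (hg.indicator hs) <|
    (hint.indicator ((hX 0) hs)).congr (.of_forall fun ω => by simp [Set.indicator_apply])
  rw [hint_s] at hsum
  filter_upwards [hsum, ae_tendsto_card_filter_div hX hind hident hd w] with ω hnum hden
  have hp : P.real {ω | d (X 0 ω) = w} ≠ 0 := (measureReal_ne_zero_iff).2 hw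
  rw [← mul_div_cancel_left₀ (∫ ω, g (X 0 ω) ∂P[|{ω | d (X 0 ω) = w}]) hp]
  refine (hnum.div hden hp).congr' <| (eventually_ne_atTop 0).mono fun N hN => ?_
  dsimp only [Pi.div_apply]
  rw [div_div_div_cancel_right₀ (Nat.cast_ne_zero.2 hN), groupMean, sum_filter]
  simp [Set.indicator_apply]

end StrongLaw

lemma measure_setOf_eq_ne_zero {Ω : Type*} [MeasurableSpace Ω] {P : Measure Ω}
    [IsProbabilityMeasure P] {D : Ω → Bool} (hD : Measurable D) {c : ℝ} (hc0 : 0 < c)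
    (hc1 : c < 1) (hc : P {ω | D ω = true} = ENNReal.ofReal c) (w : Bool) :
    P {ω | D ω = w} ≠ 0 := by
  cases w
  · have hcompl : {ω | D ω = false} = {ω | D ω = true}ᶜ := by ext; simp
    rw [hcompl, prob_compl_eq_one_sub (measurableSet_eq_fun hD measurable_const), hc]
    exact (tsub_pos_of_lt (ENNReal.ofReal_lt_one.2 hc1)).ne'
  · exact hc ▸ (ENNReal.ofReal_pos.2 hc0).ne'

lemma ae_tendsto_didEstimator_factor_outcome {Ω F : Type*} [MeasurableSpace Ω]
    {P : Measure Ω} [IsProbabilityMeasure P] [Fintype F] {Λ : Ω → F → ℝ} {D : ℕ → Ω → Bool}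
    {M : ℕ → Ω → F → ℝ} {E A : ℕ → Ω → ℝ}
    (hX : ∀ j, Measurable fun ω => (D j ω, M j ω, E j ω, A j ω))
    (hiid : iIndepFun (fun j ω => (D j ω, M j ω, E j ω, A j ω)) P)
    (hident : ∀ j, IdentDistrib (fun ω => (D j ω, M j ω, E j ω, A j ω))
      (fun ω => (D 0 ω, M 0 ω, E 0 ω, A 0 ω)) P P)
    (hD : ∀ w, P {ω | D 0 ω = w} ≠ 0) (hM : ∀ f, Integrable (fun ω => M 0 ω f) P)
    (hE : Integrable (E 0) P) (hA : Integrable (A 0) P) :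
    ∀ᵐ ω ∂P, Tendsto (fun N => didEstimator (D · ω) N
        (fun j => ∑ f, Λ ω f * M j ω f + E j ω + if D j ω then A j ω else 0)) atTop
      (𝓝 (∑ f, Λ ω f * (∫ ω, M 0 ω f ∂P[|{ω | D 0 ω = true}] -
          ∫ ω, M 0 ω f ∂P[|{ω | D 0 ω = false}]) +
        (∫ ω, E 0 ω ∂P[|{ω | D 0 ω = true}] - ∫ ω, E 0 ω ∂P[|{ω | D 0 ω = false}]) +
        ∫ ω, A 0 ω ∂P[|{ω | D 0 ω = true}])) := by
  have hmean := fun w (g : Bool × (F → ℝ) × ℝ × ℝ → ℝ) =>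
    ae_tendsto_groupMean hX hiid hident measurable_fst (hD w) (g := g)
  filter_upwards [ae_all_iff.2 fun f => hmean true (·.2.1 f) (by fun_prop) (hM f),
    ae_all_iff.2 fun f => hmean false (·.2.1 f) (by fun_prop) (hM f),
    hmean true (·.2.2.1) (by fun_prop) hE, hmean false (·.2.2.1) (by fun_prop) hE,
    hmean true (·.2.2.2) (by fun_prop) hA] with ω hM1 hM0 hE1 hE0 hA1
  simp only [didEstimator_factor_outcome]
  exact ((tendsto_finsetSum _ fun f _ => ((hM1 f).sub (hM0 f)).const_mul (Λ ω f)).add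
    (hE1.sub hE0)).add hA1

theorem did_inconsistency_factor_model_general {Ω : Type*} [MeasurableSpace Ω] (P : Measure Ω)
    [IsProbabilityMeasure P] (F : ℕ)
    (Λ : Ω → Fin F → ℝ)            -- ∇λ : post-minus-pre average of common factors
    (D : ℕ → Ω → Bool)             -- treatment indicators
    (M : ℕ → Ω → Fin F → ℝ)        -- factor loadings μ_j
    (E A : ℕ → Ω → ℝ)              -- ∇ε_j and ∇α_j (post-pre error diff., post ATE)
    (G : Ω → ℝ)                    -- common time effect ∇γ
    (α c : ℝ) (hc0 : 0 < c) (hc1 : c < 1)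
    (hΛm : Measurable Λ) (hDm : ∀ j, Measurable (D j)) (hMm : ∀ j, Measurable (M j))
    (hEm : ∀ j, Measurable (E j)) (hAm : ∀ j, Measurable (A j))
    (hL2M : ∀ j f, MemLp (fun ω => M j ω f) 2 P)
    (hL2E : ∀ j, MemLp (E j) 2 P) (hL2A : ∀ j, MemLp (A j) 2 P)
    -- sampling: units i.i.d. and independent of the common factors
    (hiid : iIndepFun
      (fun j ω => (D j ω, M j ω, E j ω, A j ω)) P)
    (hident : ∀ j, IdentDistrib (fun ω => (D j ω, M j ω, E j ω, A j ω))
      (fun ω => (D 0 ω, M 0 ω, E 0 ω, A 0 ω)) P P)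
    (hcprob : P {ω | D 0 ω = true} = ENNReal.ofReal c)
    -- conditional means of the loadings among treated and controls
    (μ1e μ0e : Fin F → ℝ)
    (hμ1e : ∀ f, μ1e f = ∫ ω, M 0 ω f ∂(P[|{ω | D 0 ω = true}]))
    (hμ0e : ∀ f, μ0e f = ∫ ω, M 0 ω f ∂(P[|{ω | D 0 ω = false}]))
    -- parallel trends
    (hpt2 : ∀ w : Bool, ∫ ω, E 0 ω ∂(P[|{ω | D 0 ω = w}]) = 0)
    -- estimand: expected post-treatment effect among the treated
    (hα : α = ∫ ω, A 0 ω ∂(P[|{ω | D 0 ω = true}]))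
    -- observed post-minus-pre outcome differences generated by the factor model
    (dY : ℕ → Ω → ℝ)
    (hdY : ∀ j ω, dY j ω = G ω + (∑ f, Λ ω f * M j ω f) + E j ω
      + (if D j ω then A j ω else 0))
    -- the DID (two-way fixed effects) estimator with `N` units
    (αhat : ℕ → Ω → ℝ)
    (hαhat : ∀ N ω, αhat N ω =
      (∑ j ∈ (Finset.range N).filter (fun j => D j ω = true), dY j ω)
        / ((Finset.range N).filter (fun j => D j ω = true)).card
      - (∑ j ∈ (Finset.range N).filter (fun j => D j ω = false), dY j ω)
        / ((Finset.range N).filter (fun j => D j ω = false)).card) :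
    TendstoInMeasure P
      (fun N ω => αhat N ω - α - ∑ f, Λ ω f * (μ1e f - μ0e f)) atTop (fun _ => 0)
    ∧ (0 < ∫ ω, (∑ f, Λ ω f * (μ1e f - μ0e f)) ^ 2 ∂P →
        ¬ TendstoInMeasure P (fun N => αhat N) atTop (fun _ => α)) := by
  have hX : ∀ j, Measurable fun ω => (D j ω, M j ω, E j ω, A j ω) := fun j => by fun_prop
  have hgroup := measure_setOf_eq_ne_zero (hDm 0) hc0 hc1 hcprob
  set Y : ℕ → Ω → ℝ := fun j ω => ∑ f, Λ ω f * M j ω f + E j ω + if D j ω then A j ω else 0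
  have hYm : ∀ j, Measurable (Y j) := fun j =>
    ((measurable_sum _ fun f _ => ((measurable_pi_apply f).comp hΛm).mul
      ((measurable_pi_apply f).comp (hMm j))).add (hEm j)).add
      (.ite (hDm j (measurableSet_singleton true)) (hAm j) measurable_const)
  have hdidY := ae_tendsto_didEstimator_factor_outcome (Λ := Λ) hX hiid hident hgroup
    (fun f => (hL2M 0 f).integrable one_le_two) ((hL2E 0).integrable one_le_two)
    ((hL2A 0).integrable one_le_two)
  simp only [← hμ1e, ← hμ0e, hpt2, ← hα, sub_zero, add_zero] at hdidY
  -- `∇γ` need not be measurable: compare `α̂` with the estimator on `dY - ∇γ`, which agrees with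
  -- it once both arms are nonempty.
  have hconv : TendstoInMeasure P αhat atTop (fun ω => ∑ f, Λ ω f * (μ1e f - μ0e f) + α) := by
    refine .of_eqOn_of_ae_eventually_mem (s := fun N => {ω | ∀ w, ∃ j < N, D j ω = w})
      (fun N => measurableSet_setOfPred.2 (by fun_prop))
      (ae_eventually_forall_exists_eq hX hiid hident measurable_fst hgroup) (fun N ω hω => ?_)
      (tendstoInMeasure_of_tendsto_ae (fun N =>
        (measurable_didEstimator hDm hYm N).aestronglyMeasurable) hdidY)
    rw [hαhat, ← didEstimator_const_add (G ω) _ hω]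
    simp only [hdY, Y, add_assoc]
    rfl
  refine ⟨by simpa only [sub_sub, add_comm α] using tendstoInMeasure_sub_iff.2 hconv,
    fun hpos hcons => ?_⟩
  have hB : ∀ᵐ ω ∂P, (∑ f, Λ ω f * (μ1e f - μ0e f)) ^ 2 = 0 := by
    filter_upwards [tendstoInMeasure_ae_unique hconv hcons] with ω hω
    simpa using hω
  exact hpos.ne' (integral_eq_zero_of_ae hB)

/-- In the linear factor model with i.i.d. units independent of the common factors and
parallel trends, the DID estimator satisfies `α̂ - α = ∇λ(μ₁ᵉ - μ₀ᵉ) + o_p(1)` as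
`N → ∞`; in particular, `α̂` is not consistent for `α` when
`(μ₁ᵉ - μ₀ᵉ)' E[(∇λ)'(∇λ)] (μ₁ᵉ - μ₀ᵉ) > 0`. -/
theorem did_inconsistency_factor_model {Ω : Type*} [MeasurableSpace Ω] (P : Measure Ω)
    [IsProbabilityMeasure P] (F : ℕ)
    (Λ : Ω → Fin F → ℝ)            -- ∇λ : post-minus-pre average of common factors
    (D : ℕ → Ω → Bool)             -- treatment indicators
    (M : ℕ → Ω → Fin F → ℝ)        -- factor loadings μ_j
    (E A : ℕ → Ω → ℝ)              -- ∇ε_j and ∇α_j (post-pre error diff., post ATE)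
    (G : Ω → ℝ)                    -- common time effect ∇γ
    (α c : ℝ) (hc0 : 0 < c) (hc1 : c < 1)
    (hΛm : Measurable Λ) (hDm : ∀ j, Measurable (D j)) (hMm : ∀ j, Measurable (M j))
    (hEm : ∀ j, Measurable (E j)) (hAm : ∀ j, Measurable (A j))
    (hL2Λ : ∀ f, MemLp (fun ω => Λ ω f) 2 P)
    (hL2M : ∀ j f, MemLp (fun ω => M j ω f) 2 P)
    (hL2E : ∀ j, MemLp (E j) 2 P) (hL2A : ∀ j, MemLp (A j) 2 P)
    -- sampling: units i.i.d. and independent of the common factors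
    (hiid : iIndepFun
      (fun j ω => (D j ω, M j ω, E j ω, A j ω)) P)
    (hident : ∀ j, IdentDistrib (fun ω => (D j ω, M j ω, E j ω, A j ω))
      (fun ω => (D 0 ω, M 0 ω, E 0 ω, A 0 ω)) P P)
    (hindepΛ : IndepFun (fun ω j => (D j ω, M j ω, E j ω, A j ω)) Λ P)
    (hcprob : P {ω | D 0 ω = true} = ENNReal.ofReal c)
    -- conditional means of the loadings among treated and controls
    (μ1e μ0e : Fin F → ℝ)
    (hμ1e : ∀ f, μ1e f = ∫ ω, M 0 ω f ∂(P[|{ω | D 0 ω = true}]))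
    (hμ0e : ∀ f, μ0e f = ∫ ω, M 0 ω f ∂(P[|{ω | D 0 ω = false}]))
    -- parallel trends
    (hpt1 : ∑ f, (∫ ω, Λ ω f ∂P) * (μ1e f - μ0e f) = 0)
    (hpt2 : ∀ w : Bool, ∫ ω, E 0 ω ∂(P[|{ω | D 0 ω = w}]) = 0)
    -- estimand: expected post-treatment effect among the treated
    (hα : α = ∫ ω, A 0 ω ∂(P[|{ω | D 0 ω = true}]))
    -- observed post-minus-pre outcome differences generated by the factor model
    (dY : ℕ → Ω → ℝ)
    (hdY : ∀ j ω, dY j ω = G ω + (∑ f, Λ ω f * M j ω f) + E j ω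
      + (if D j ω then A j ω else 0))
    -- the DID (two-way fixed effects) estimator with `N` units
    (αhat : ℕ → Ω → ℝ)
    (hαhat : ∀ N ω, αhat N ω =
      (∑ j ∈ (Finset.range N).filter (fun j => D j ω = true), dY j ω)
        / ((Finset.range N).filter (fun j => D j ω = true)).card
      - (∑ j ∈ (Finset.range N).filter (fun j => D j ω = false), dY j ω)
        / ((Finset.range N).filter (fun j => D j ω = false)).card) :
    TendstoInMeasure P
      (fun N ω => αhat N ω - α - ∑ f, Λ ω f * (μ1e f - μ0e f)) atTop (fun _ => 0)
    ∧ (0 < ∫ ω, (∑ f, Λ ω f * (μ1e f - μ0e f)) ^ 2 ∂P →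
        ¬ TendstoInMeasure P (fun N => αhat N) atTop (fun _ => α)) :=
  did_inconsistency_factor_model_general P F Λ D M E A G α c hc0 hc1 hΛm hDm hMm hEm hAm hL2M hL2E
    hL2A hiid hident hcprob μ1e μ0e hμ1e hμ0e hpt2 hα dY hdY αhat hαhat
end

section
/- In the many-factor model with paired groups, under fixed treatment assignment and Assumption (i.i.d. mean-zero factors and idiosyncratic errors), the exact variance of the DID estimator is var(α̂) = (2/N₁)σ²_λ + (2/N₀)σ²_δ + (1/N₁)σ²_ε(1) + (1/N₀)σ²_ε(0). -/
open MeasureTheory ProbabilityTheory Finset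

/-!
Every pair contributes its factor twice to the group sum, so with `m_w = N_w / 2`,
`α̂ - α = m₁⁻¹ ∑_f ∇λ(f) - m₀⁻¹ ∑_f ∇δ(f) + N₁⁻¹ ∑_{j treated} ∇ε_j - N₀⁻¹ ∑_{j control} ∇ε_j`
is a linear combination of independent square-integrable variables. Its variance is therefore the
sum of the squared weights times the variances, e.g. `m₁ · m₁⁻² σ²_λ = (2 / N₁) σ²_λ`.
-/

lemma Fintype.sum_comp_of_card_fiber_eq {ι κ M : Type*} [Fintype ι] [Fintype κ] [DecidableEq κ]
    [AddCommMonoid M] (p : ι → κ) (k : ℕ) (hp : ∀ f, #{j | p j = f} = k) (g : κ → M) :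
    ∑ j, g (p j) = k • ∑ f, g f := by
  rw [← Finset.sum_fiberwise univ p (fun j => g (p j)), smul_sum]
  refine Finset.sum_congr rfl fun f _ => ?_
  rw [Finset.sum_congr rfl fun j hj => congrArg g (mem_filter.mp hj).2, sum_const, hp f]

lemma ProbabilityTheory.iIndepFun.variance_sum_const_mul {Ω ι : Type*} [MeasurableSpace Ω]
    {μ : Measure Ω} [Fintype ι] {X : ι → Ω → ℝ} (hindep : iIndepFun X μ)
    (hX : ∀ i, MemLp (X i) 2 μ) (c : ι → ℝ) :
    Var[fun ω => ∑ i, c i * X i ω; μ] = ∑ i, c i ^ 2 * Var[X i; μ] := by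
  have hcX : ∀ i ∈ (univ : Finset ι), MemLp (fun ω => c i * X i ω) 2 μ :=
    fun i _ => (hX i).const_mul (c i)
  have hpair : Set.Pairwise (univ : Finset ι) fun i j =>
      (fun ω => c i * X i ω) ⟂ᵢ[μ] fun ω => c j * X j ω :=
    fun i _ j _ hij => (hindep.indepFun hij).comp (measurable_const_mul (c i))
      (measurable_const_mul (c j))
  calc Var[fun ω => ∑ i, c i * X i ω; μ] = Var[∑ i, fun ω => c i * X i ω; μ] := by
        rw [Finset.sum_fn]
    _ = ∑ i, Var[fun ω => c i * X i ω; μ] := IndepFun.variance_sum hcX hpair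
    _ = ∑ i, c i ^ 2 * Var[X i; μ] := sum_congr rfl fun i _ => variance_const_mul (c i) (X i) μ

lemma mul_inv_sq_self {G₀ : Type*} [CommGroupWithZero G₀] (x : G₀) : x * x⁻¹ ^ 2 = x⁻¹ := by
  rw [sq, ← mul_assoc, mul_comm x]
  simpa using mul_inv_mul_cancel x⁻¹

theorem paired_factor_exact_variance_general {Ω : Type*} [MeasurableSpace Ω] (P : Measure Ω)
    [IsProbabilityMeasure P]
    (m1 m0 n1 n0 : ℕ)
    (hn1 : n1 = 2 * m1) (hn0 : n0 = 2 * m0)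
    -- pair assignments: each pair contains exactly two units
    (p : Fin n1 → Fin m1) (q : Fin n0 → Fin m0)
    (hp : ∀ f, (Finset.univ.filter (fun j => p j = f)).card = 2)
    (hq : ∀ f, (Finset.univ.filter (fun j => q j = f)).card = 2)
    -- pair-level factors (∇λ(f), ∇δ(f)) and idiosyncratic differences (∇ε_j)
    (L : Fin m1 → Ω → ℝ) (Dl : Fin m0 → Ω → ℝ)
    (E1 : Fin n1 → Ω → ℝ) (E0 : Fin n0 → Ω → ℝ)
    (hLL2 : ∀ f, MemLp (L f) 2 P) (hDlL2 : ∀ f, MemLp (Dl f) 2 P)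
    (hE1L2 : ∀ j, MemLp (E1 j) 2 P) (hE0L2 : ∀ j, MemLp (E0 j) 2 P)
    -- mutual independence of all factors and idiosyncratic terms
    (hindep : iIndepFun
      (Sum.elim (Sum.elim L Dl) (Sum.elim E1 E0) :
        (Fin m1 ⊕ Fin m0) ⊕ (Fin n1 ⊕ Fin n0) → Ω → ℝ) P)
    -- variances
    (sl2 sd2 se12 se02 : ℝ)
    (hLvar : ∀ f, variance (L f) P = sl2) (hDlvar : ∀ f, variance (Dl f) P = sd2)
    (hE1var : ∀ j, variance (E1 j) P = se12) (hE0var : ∀ j, variance (E0 j) P = se02)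
    -- the DID estimator decomposition under fixed treatment assignment
    (α : ℝ) (αhat : Ω → ℝ)
    (hαhat : ∀ ω, αhat ω - α =
      (∑ j, (L (p j) ω + E1 j ω)) / n1 - (∑ j, (Dl (q j) ω + E0 j ω)) / n0) :
    variance αhat P =
      (2 / n1) * sl2 + (2 / n0) * sd2 + (1 / n1) * se12 + (1 / n0) * se02 := by
  subst hn1 hn0
  set X : (Fin m1 ⊕ Fin m0) ⊕ (Fin (2 * m1) ⊕ Fin (2 * m0)) → Ω → ℝ :=
    Sum.elim (Sum.elim L Dl) (Sum.elim E1 E0)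
  set c : (Fin m1 ⊕ Fin m0) ⊕ (Fin (2 * m1) ⊕ Fin (2 * m0)) → ℝ :=
    Sum.elim (Sum.elim (fun _ => (m1 : ℝ)⁻¹) (fun _ => -(m0 : ℝ)⁻¹))
      (Sum.elim (fun _ => (2 * (m1 : ℝ))⁻¹) (fun _ => -(2 * (m0 : ℝ))⁻¹))
  have hXL2 : ∀ i, MemLp (X i) 2 P := by
    rintro ((f | f) | (j | j))
    exacts [hLL2 f, hDlL2 f, hE1L2 j, hE0L2 j]
  have hdecomp : αhat = fun ω => α + ∑ i, c i * X i ω := by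
    funext ω
    rw [← sub_eq_iff_eq_add', hαhat ω]
    simp only [sum_add_distrib, Fintype.sum_comp_of_card_fiber_eq p 2 hp (fun f => L f ω),
      Fintype.sum_comp_of_card_fiber_eq q 2 hq (fun f => Dl f ω), Fintype.sum_sum_type, c, X,
      Sum.elim_inl, Sum.elim_inr, ← mul_sum]
    push_cast
    ring
  have hsum : MemLp (fun ω => ∑ i, c i * X i ω) 2 P :=
    memLp_finsetSum univ fun i _ => (hXL2 i).const_mul (c i)
  rw [hdecomp, variance_const_add hsum.aestronglyMeasurable α,
    hindep.variance_sum_const_mul hXL2 c]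
  simp only [Fintype.sum_sum_type, c, X, Sum.elim_inl, Sum.elim_inr, hLvar, hDlvar, hE1var,
    hE0var, sum_const, card_univ, Fintype.card_fin, nsmul_eq_mul, Nat.cast_mul, Nat.cast_ofNat,
    neg_sq, ← mul_assoc, mul_inv_sq_self]
  ring

/-- In the many-factor model with paired groups and fixed treatment assignment,
the exact variance of the DID estimator is
`var(α̂) = (2/N₁)σ²_λ + (2/N₀)σ²_δ + (1/N₁)σ²_ε(1) + (1/N₀)σ²_ε(0)`. -/
theorem paired_factor_exact_variance {Ω : Type*} [MeasurableSpace Ω] (P : Measure Ω)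
    [IsProbabilityMeasure P]
    (m1 m0 n1 n0 : ℕ) (hm1 : 0 < m1) (hm0 : 0 < m0)
    (hn1 : n1 = 2 * m1) (hn0 : n0 = 2 * m0)
    -- pair assignments: each pair contains exactly two units
    (p : Fin n1 → Fin m1) (q : Fin n0 → Fin m0)
    (hp : ∀ f, (Finset.univ.filter (fun j => p j = f)).card = 2)
    (hq : ∀ f, (Finset.univ.filter (fun j => q j = f)).card = 2)
    -- pair-level factors (∇λ(f), ∇δ(f)) and idiosyncratic differences (∇ε_j)
    (L : Fin m1 → Ω → ℝ) (Dl : Fin m0 → Ω → ℝ)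
    (E1 : Fin n1 → Ω → ℝ) (E0 : Fin n0 → Ω → ℝ)
    (hLm : ∀ f, Measurable (L f)) (hDlm : ∀ f, Measurable (Dl f))
    (hE1m : ∀ j, Measurable (E1 j)) (hE0m : ∀ j, Measurable (E0 j))
    (hLL2 : ∀ f, MemLp (L f) 2 P) (hDlL2 : ∀ f, MemLp (Dl f) 2 P)
    (hE1L2 : ∀ j, MemLp (E1 j) 2 P) (hE0L2 : ∀ j, MemLp (E0 j) 2 P)
    -- mutual independence of all factors and idiosyncratic terms
    (hindep : iIndepFun
      (Sum.elim (Sum.elim L Dl) (Sum.elim E1 E0) :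
        (Fin m1 ⊕ Fin m0) ⊕ (Fin n1 ⊕ Fin n0) → Ω → ℝ) P)
    -- mean zero
    (hLmean : ∀ f, ∫ ω, L f ω ∂P = 0) (hDlmean : ∀ f, ∫ ω, Dl f ω ∂P = 0)
    (hE1mean : ∀ j, ∫ ω, E1 j ω ∂P = 0) (hE0mean : ∀ j, ∫ ω, E0 j ω ∂P = 0)
    -- variances
    (sl2 sd2 se12 se02 : ℝ)
    (hLvar : ∀ f, variance (L f) P = sl2) (hDlvar : ∀ f, variance (Dl f) P = sd2)
    (hE1var : ∀ j, variance (E1 j) P = se12) (hE0var : ∀ j, variance (E0 j) P = se02)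
    -- the DID estimator decomposition under fixed treatment assignment
    (α : ℝ) (αhat : Ω → ℝ)
    (hαhat : ∀ ω, αhat ω - α =
      (∑ j, (L (p j) ω + E1 j ω)) / n1 - (∑ j, (Dl (q j) ω + E0 j ω)) / n0) :
    variance αhat P =
      (2 / n1) * sl2 + (2 / n0) * sd2 + (1 / n1) * se12 + (1 / n0) * se02 :=
  paired_factor_exact_variance_general P m1 m0 n1 n0 hn1 hn0 p q hp hq L Dl E1 E0 hLL2 hDlL2 hE1L2
    hE0L2 hindep sl2 sd2 se12 se02 hLvar hDlvar hE1var hE0var α αhat hαhat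
end

section
/- In the many-factor paired model, the TWFE residual for a treated unit j in pair Λ_f equals Ŵ_j = ∇λ(f) + ∇ε_j − (2/N₁)∑_{f'=1}^{N₁/2}∇λ(f') − (1/N₁)∑_{k∈I₁}∇ε_k, and consequently (1/N₁)∑_{j∈I₁}Ŵ_j² = σ²_λ + σ²_ε(1) + o_p(1) as N₁ → ∞. -/
/-!
The common term `C` cancels on demeaning, so with `x_j = ∇λ(⌊j/2⌋) + ∇ε_j` the residuals are
`x_j - x̄` and their mean square is `mean(x²) - x̄²`. Summing unit by unit within each pair turns
both averages into averages of functions of the i.i.d. pair blocks `(∇λ(f), ∇ε_{2f}, ∇ε_{2f+1})`.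
The strong law then gives `mean(x²) → σ²_λ + σ²_ε(1)` and `x̄ → 0` almost surely, and almost sure
convergence implies convergence in probability.
-/

open MeasureTheory ProbabilityTheory Filter Finset Topology

theorem Finset.sum_range_two_mul {M : Type*} [AddCommMonoid M] (g : ℕ → M) (k : ℕ) :
    ∑ j ∈ range (2 * k), g j = ∑ f ∈ range k, (g (2 * f) + g (2 * f + 1)) := by
  induction k with
  | zero => simp
  | succ n ih =>
    rw [show 2 * (n + 1) = 2 * n + 1 + 1 by ring, sum_range_succ, sum_range_succ, ih,
      sum_range_succ, add_assoc]

theorem Finset.sum_range_two_mul_div_two {M : Type*} [AddCommMonoid M] (g : ℕ → M) (k : ℕ) :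
    ∑ j ∈ range (2 * k), g (j / 2) = 2 • ∑ f ∈ range k, g f := by
  rw [sum_range_two_mul, two_nsmul, ← sum_add_distrib]
  refine sum_congr rfl fun f _ => ?_
  rw [show 2 * f / 2 = f by omega, show (2 * f + 1) / 2 = f by omega]

theorem Finset.add_sub_mean_add {ι : Type*} (s : Finset ι) (hs : s.Nonempty) (c : ℝ)
    (x : ι → ℝ) (j : ι) :
    c + x j - (∑ i ∈ s, (c + x i)) / #s = x j - (∑ i ∈ s, x i) / #s := by
  have hcard : (#s : ℝ) ≠ 0 := by exact_mod_cast hs.card_pos.ne'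
  rw [sum_add_distrib, sum_const, nsmul_eq_mul]
  field_simp
  ring

theorem Finset.sum_sub_mean_sq_div {ι : Type*} (s : Finset ι) (x : ι → ℝ) :
    (∑ j ∈ s, (x j - (∑ i ∈ s, x i) / #s) ^ 2) / #s
      = (∑ j ∈ s, x j ^ 2) / #s - ((∑ j ∈ s, x j) / #s) ^ 2 := by
  rcases s.eq_empty_or_nonempty with rfl | hs
  · simp
  have hcard : (#s : ℝ) ≠ 0 := by exact_mod_cast hs.card_pos.ne'
  set m := (∑ i ∈ s, x i) / #s
  have hexpand :
      ∑ j ∈ s, (x j - m) ^ 2 = ∑ j ∈ s, x j ^ 2 - 2 * m * ∑ j ∈ s, x j + #s * m ^ 2 := by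
    simp only [sub_sq, sum_add_distrib, sum_sub_distrib, ← sum_mul, ← mul_sum, sum_const,
      nsmul_eq_mul]
    ring
  rw [hexpand, show ∑ j ∈ s, x j = m * #s by simp only [m]; field_simp]
  field_simp
  ring

theorem sum_sub_mean_sq_range_two_mul (x : ℕ → ℝ) (k : ℕ) :
    (∑ j ∈ range (2 * k), (x j - (∑ i ∈ range (2 * k), x i) / (2 * k : ℝ)) ^ 2) / (2 * k : ℝ)
      = (∑ f ∈ range k, (x (2 * f) ^ 2 + x (2 * f + 1) ^ 2)) / k / 2
        - ((∑ f ∈ range k, (x (2 * f) + x (2 * f + 1))) / k / 2) ^ 2 := by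
  have h := sum_sub_mean_sq_div (range (2 * k)) x
  simp only [card_range, Nat.cast_mul, Nat.cast_ofNat] at h
  rw [h, sum_range_two_mul (fun j => x j ^ 2), sum_range_two_mul, div_div, div_div,
    mul_comm (k : ℝ)]

theorem ProbabilityTheory.strong_law_ae_real_comp {Ω β : Type*} [MeasurableSpace Ω]
    [MeasurableSpace β] {μ : Measure Ω} (Y : ℕ → Ω → β)
    (hindep : Pairwise fun i j => Y i ⟂ᵢ[μ] Y j) (hident : ∀ i, IdentDistrib (Y i) (Y 0) μ μ)
    {g : β → ℝ} (hg : Measurable g) (hint : Integrable (g ∘ Y 0) μ) :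
    ∀ᵐ ω ∂μ, Tendsto (fun n : ℕ => (∑ i ∈ range n, g (Y i ω)) / n) atTop
      (𝓝 (∫ ω, g (Y 0 ω) ∂μ)) :=
  strong_law_ae_real (fun i => g ∘ Y i) hint (fun _ _ hij => (hindep hij).comp hg hg)
    fun i => (hident i).comp hg

theorem ProbabilityTheory.IndepFun.integral_add_sq {Ω : Type*} [MeasurableSpace Ω]
    {μ : Measure Ω} [IsProbabilityMeasure μ] {X Y : Ω → ℝ} (hXY : X ⟂ᵢ[μ] Y)
    (hX : MemLp X 2 μ) (hY : MemLp Y 2 μ) (hX0 : ∫ ω, X ω ∂μ = 0) (hY0 : ∫ ω, Y ω ∂μ = 0) :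
    ∫ ω, (X ω + Y ω) ^ 2 ∂μ = variance X μ + variance Y μ := by
  have hmean : ∫ ω, (X + Y) ω ∂μ = 0 := by
    rw [Pi.add_def, integral_add (hX.integrable one_le_two) (hY.integrable one_le_two), hX0, hY0,
      add_zero]
  rw [← hXY.variance_add hX hY, variance_of_integral_eq_zero (hX.add hY).aemeasurable hmean]
  rfl

section PairBlocks

variable {Ω : Type*} [MeasurableSpace Ω] {P : Measure Ω} {L E : ℕ → Ω → ℝ}

def pairBlock (L E : ℕ → Ω → ℝ) (f : ℕ) (ω : Ω) : ℝ × ℝ × ℝ :=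
  (L f ω, E (2 * f) ω, E (2 * f + 1) ω)

theorem ProbabilityTheory.iIndepFun.indepFun_pairBlock (h : iIndepFun (Sum.elim L E) P)
    (hL : ∀ f, AEMeasurable (L f) P) (hE : ∀ j, AEMeasurable (E j) P) {f g : ℕ} (hfg : f ≠ g) :
    pairBlock L E f ⟂ᵢ[P] pairBlock L E g := by
  have hm : ∀ i, AEMeasurable (Sum.elim L E i) P := by
    rintro (f | j)
    exacts [hL f, hE j]
  have hdisj : Disjoint
      ({Sum.inl f, Sum.inr (2 * f), Sum.inr (2 * f + 1)} : Finset (ℕ ⊕ ℕ))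
      {Sum.inl g, Sum.inr (2 * g), Sum.inr (2 * g + 1)} := by
    simp only [disjoint_insert_left, disjoint_insert_right, disjoint_singleton, mem_insert,
      mem_singleton, ne_eq, Sum.inl.injEq, Sum.inr.injEq, reduceCtorEq, false_or, or_false, not_false_eq_true,
      true_and]
    omega
  have hmeas : ∀ a : ℕ, Measurable fun v : ({Sum.inl a, Sum.inr (2 * a), Sum.inr (2 * a + 1)} :
      Finset (ℕ ⊕ ℕ)) → ℝ => (v ⟨Sum.inl a, by simp⟩, v ⟨Sum.inr (2 * a), by simp⟩,
        v ⟨Sum.inr (2 * a + 1), by simp⟩) := fun a => by fun_prop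
  exact (h.indepFun_finset₀ _ _ hdisj hm).comp (hmeas f) (hmeas g)

theorem ProbabilityTheory.iIndepFun.identDistrib_pairBlock [IsFiniteMeasure P]
    (h : iIndepFun (Sum.elim L E) P)
    (hLid : ∀ f, IdentDistrib (L f) (L 0) P P) (hEid : ∀ j, IdentDistrib (E j) (E 0) P P)
    (f : ℕ) : IdentDistrib (pairBlock L E f) (pairBlock L E 0) P P := by
  have hm : ∀ i, AEMeasurable (Sum.elim L E i) P := by
    rintro (f | j)
    exacts [(hLid f).aemeasurable_fst, (hEid j).aemeasurable_fst]
  have hE : ∀ a, IdentDistrib (fun ω => (E (2 * a) ω, E (2 * a + 1) ω))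
      (fun ω => (E (2 * 0) ω, E (2 * 0 + 1) ω)) P P := fun a =>
    ((hEid _).trans (hEid _).symm).prodMk ((hEid _).trans (hEid _).symm)
      (h.indepFun (i := Sum.inr (2 * a)) (j := Sum.inr (2 * a + 1)) (by simp))
      (h.indepFun (i := Sum.inr (2 * 0)) (j := Sum.inr (2 * 0 + 1)) (by simp))
  have hLE : ∀ a, L a ⟂ᵢ[P] fun ω => (E (2 * a) ω, E (2 * a + 1) ω) := fun a =>
    (h.indepFun_prodMk₀ hm (Sum.inr (2 * a)) (Sum.inr (2 * a + 1)) (Sum.inl a)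
      (by simp) (by simp)).symm
  exact (hLid f).prodMk (hE f) (hLE f) (hLE 0)

theorem ProbabilityTheory.iIndepFun.ae_tendsto_pair_mean_sq [IsProbabilityMeasure P]
    (h : iIndepFun (Sum.elim L E) P)
    (hLid : ∀ f, IdentDistrib (L f) (L 0) P P) (hEid : ∀ j, IdentDistrib (E j) (E 0) P P)
    (hL2 : MemLp (L 0) 2 P) (hE2 : MemLp (E 0) 2 P)
    (hL0 : ∫ ω, L 0 ω ∂P = 0) (hE0 : ∫ ω, E 0 ω ∂P = 0) :
    ∀ᵐ ω ∂P, Tendsto (fun k : ℕ =>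
        (∑ f ∈ range k, ((L f ω + E (2 * f) ω) ^ 2 + (L f ω + E (2 * f + 1) ω) ^ 2)) / k / 2
          - ((∑ f ∈ range k, (L f ω + E (2 * f) ω + (L f ω + E (2 * f + 1) ω))) / k / 2) ^ 2)
      atTop (𝓝 (variance (L 0) P + variance (E 0) P)) := by
  have hE2' : ∀ j, MemLp (E j) 2 P := fun j => (hEid j).symm.memLp_snd hE2
  have hE0' : ∀ j, ∫ ω, E j ω ∂P = 0 := fun j => (hEid j).integral_eq.trans hE0
  have hsq : ∀ j, ∫ ω, (L 0 ω + E j ω) ^ 2 ∂P = variance (L 0) P + variance (E 0) P :=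
    fun j => by
      rw [← (hEid j).variance_eq]
      exact (h.indepFun (i := Sum.inl 0) (j := Sum.inr j) (by simp)).integral_add_sq hL2
        (hE2' j) hL0 (hE0' j)
  have hsumint : ∀ j, Integrable (fun ω => L 0 ω + E j ω) P := fun j =>
    (hL2.integrable one_le_two).add ((hE2' j).integrable one_le_two)
  have hsum0 : ∀ j, ∫ ω, (L 0 ω + E j ω) ∂P = 0 := fun j => by
    rw [integral_add (hL2.integrable one_le_two) ((hE2' j).integrable one_le_two), hL0, hE0',
      add_zero]
  have hsqint : ∀ j, Integrable (fun ω => (L 0 ω + E j ω) ^ 2) P := fun j =>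
    (hL2.add (hE2' j)).integrable_sq
  have hindep : Pairwise fun f g => pairBlock L E f ⟂ᵢ[P] pairBlock L E g := fun _ _ hfg =>
    h.indepFun_pairBlock (fun f => (hLid f).aemeasurable_fst) (fun j => (hEid j).aemeasurable_fst)
      hfg
  have hU := strong_law_ae_real_comp (pairBlock L E) hindep (h.identDistrib_pairBlock hLid hEid)
    (g := fun p => (p.1 + p.2.1) ^ 2 + (p.1 + p.2.2) ^ 2) (by fun_prop)
    (by exact (hsqint (2 * 0)).add (hsqint (2 * 0 + 1)))
  have hV := strong_law_ae_real_comp (pairBlock L E) hindep (h.identDistrib_pairBlock hLid hEid)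
    (g := fun p => p.1 + p.2.1 + (p.1 + p.2.2)) (by fun_prop)
    (by exact (hsumint (2 * 0)).add (hsumint (2 * 0 + 1)))
  have hUmean : ∫ ω, ((L 0 ω + E (2 * 0) ω) ^ 2 + (L 0 ω + E (2 * 0 + 1) ω) ^ 2) ∂P
      = 2 * (variance (L 0) P + variance (E 0) P) := by
    rw [integral_add (hsqint _) (hsqint _), hsq, hsq]
    ring
  have hVmean : ∫ ω, (L 0 ω + E (2 * 0) ω + (L 0 ω + E (2 * 0 + 1) ω)) ∂P = 0 := by
    rw [integral_add (hsumint _) (hsumint _), hsum0, hsum0, add_zero]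
  simp only [pairBlock, hUmean, hVmean] at hU hV
  filter_upwards [hU, hV] with ω hUω hVω
  convert (hUω.div_const 2).sub ((hVω.div_const 2).pow 2) using 2
  ring

end PairBlocks

theorem paired_factor_residuals_general {Ω : Type*} [MeasurableSpace Ω] (P : Measure Ω)
    [IsProbabilityMeasure P]
    (L E1 : ℕ → Ω → ℝ) (C : Ω → ℝ)
    (hL4 : ∀ f, MemLp (L f) 4 P) (hE14 : ∀ j, MemLp (E1 j) 4 P)
    (hindep : iIndepFun
      (Sum.elim L E1 : ℕ ⊕ ℕ → Ω → ℝ) P)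
    (hLid : ∀ f, IdentDistrib (L f) (L 0) P P)
    (hE1id : ∀ j, IdentDistrib (E1 j) (E1 0) P P)
    (hLmean : ∫ ω, L 0 ω ∂P = 0) (hE1mean : ∫ ω, E1 0 ω ∂P = 0)
    (sl2 se12 : ℝ)
    (hLvar : variance (L 0) P = sl2) (hE1var : variance (E1 0) P = se12)
    -- observed post-minus-pre outcome differences of treated units: common term,
    -- pair-level factor, and idiosyncratic term
    (dY : ℕ → Ω → ℝ)
    (hdY : ∀ j ω, dY j ω = C ω + L (j / 2) ω + E1 j ω)
    -- TWFE residuals when there are `N₁ = 2k` treated units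
    (What : ℕ → ℕ → Ω → ℝ)
    (hWhat : ∀ k j ω, What k j ω =
      dY j ω - (∑ i ∈ Finset.range (2 * k), dY i ω) / (2 * k : ℝ)) :
    -- exact residual formula
    (∀ k, 0 < k → ∀ j < 2 * k, ∀ ω, What k j ω =
      L (j / 2) ω + E1 j ω
        - (2 / (2 * k : ℝ)) * ∑ f ∈ Finset.range k, L f ω
        - (1 / (2 * k : ℝ)) * ∑ i ∈ Finset.range (2 * k), E1 i ω)
    -- law of large numbers for the average of squared residuals
    ∧ TendstoInMeasure P
        (fun k ω => (∑ j ∈ Finset.range (2 * k), (What k j ω) ^ 2) / (2 * k : ℝ))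
        atTop (fun _ => sl2 + se12) := by
  have hres : ∀ k, 0 < k → ∀ j ω, What k j ω = L (j / 2) ω + E1 j ω
      - (∑ i ∈ range (2 * k), (L (i / 2) ω + E1 i ω)) / (2 * k : ℝ) := by
    intro k hk j ω
    have h := add_sub_mean_add (range (2 * k)) (nonempty_range_iff.mpr (by omega)) (C ω)
      (fun i => L (i / 2) ω + E1 i ω) j
    simp only [card_range, Nat.cast_mul, Nat.cast_ofNat] at h
    simp only [hWhat, hdY, add_assoc, h]
  refine ⟨fun k hk j _ ω => ?_, ?_⟩
  · have hk' : (k : ℝ) ≠ 0 := by positivity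
    rw [hres k hk, sum_add_distrib, sum_range_two_mul_div_two (fun f => L f ω), nsmul_eq_mul]
    field_simp
    ring
  have hmean_sq : (fun k ω => (∑ j ∈ range (2 * k), What k j ω ^ 2) / (2 * k : ℝ)) = fun k ω =>
      (∑ f ∈ range k, ((L f ω + E1 (2 * f) ω) ^ 2 + (L f ω + E1 (2 * f + 1) ω) ^ 2)) / k / 2
        - ((∑ f ∈ range k, (L f ω + E1 (2 * f) ω + (L f ω + E1 (2 * f + 1) ω))) / k / 2) ^ 2 := by
    funext k ω
    rw [sum_congr rfl fun j hj => by rw [hres k (by rw [mem_range] at hj; omega)],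
      sum_sub_mean_sq_range_two_mul (fun j => L (j / 2) ω + E1 j ω)]
    simp only [Nat.mul_div_cancel_left _ two_pos, Nat.mul_add_div two_pos, Nat.reduceDiv,
      add_zero]
  have hLm : ∀ f, AEStronglyMeasurable (L f) P := fun f => (hL4 f).aestronglyMeasurable
  have hE1m : ∀ j, AEStronglyMeasurable (E1 j) P := fun j => (hE14 j).aestronglyMeasurable
  rw [hmean_sq]
  refine tendstoInMeasure_of_tendsto_ae (fun k => by fun_prop) ?_
  simpa only [hLvar, hE1var] using hindep.ae_tendsto_pair_mean_sq hLid hE1id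
    ((hL4 0).mono_exponent (by norm_num)) ((hE14 0).mono_exponent (by norm_num)) hLmean hE1mean

/-- In the many-factor paired model (treated units `0,…,2k-1` with pairs `{2f, 2f+1}`),
the TWFE residual of a treated unit `j` equals
`Ŵ_j = ∇λ(⌊j/2⌋) + ∇ε_j - (2/N₁)∑_f ∇λ(f) - (1/N₁)∑_i ∇ε_i`, and consequently
`(1/N₁)∑_j Ŵ_j² = σ²_λ + σ²_ε(1) + o_p(1)` as `N₁ → ∞`. -/
theorem paired_factor_residuals {Ω : Type*} [MeasurableSpace Ω] (P : Measure Ω)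
    [IsProbabilityMeasure P]
    (L E1 : ℕ → Ω → ℝ) (C : Ω → ℝ)
    (hLm : ∀ f, Measurable (L f)) (hE1m : ∀ j, Measurable (E1 j))
    (hL4 : ∀ f, MemLp (L f) 4 P) (hE14 : ∀ j, MemLp (E1 j) 4 P)
    (hindep : iIndepFun
      (Sum.elim L E1 : ℕ ⊕ ℕ → Ω → ℝ) P)
    (hLid : ∀ f, IdentDistrib (L f) (L 0) P P)
    (hE1id : ∀ j, IdentDistrib (E1 j) (E1 0) P P)
    (hLmean : ∫ ω, L 0 ω ∂P = 0) (hE1mean : ∫ ω, E1 0 ω ∂P = 0)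
    (sl2 se12 : ℝ)
    (hLvar : variance (L 0) P = sl2) (hE1var : variance (E1 0) P = se12)
    -- observed post-minus-pre outcome differences of treated units: common term,
    -- pair-level factor, and idiosyncratic term
    (dY : ℕ → Ω → ℝ)
    (hdY : ∀ j ω, dY j ω = C ω + L (j / 2) ω + E1 j ω)
    -- TWFE residuals when there are `N₁ = 2k` treated units
    (What : ℕ → ℕ → Ω → ℝ)
    (hWhat : ∀ k j ω, What k j ω =
      dY j ω - (∑ i ∈ Finset.range (2 * k), dY i ω) / (2 * k : ℝ)) :
    -- exact residual formula
    (∀ k, 0 < k → ∀ j < 2 * k, ∀ ω, What k j ω =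
      L (j / 2) ω + E1 j ω
        - (2 / (2 * k : ℝ)) * ∑ f ∈ Finset.range k, L f ω
        - (1 / (2 * k : ℝ)) * ∑ i ∈ Finset.range (2 * k), E1 i ω)
    -- law of large numbers for the average of squared residuals
    ∧ TendstoInMeasure P
        (fun k ω => (∑ j ∈ Finset.range (2 * k), (What k j ω) ^ 2) / (2 * k : ℝ))
        atTop (fun _ => sl2 + se12) :=
  paired_factor_residuals_general P L E1 C hL4 hE14 hindep hLid hE1id hLmean hE1mean sl2 se12 hLvar
    hE1var dY hdY What hWhat
end

section
/- Suppose (α̂₁, α̂₀) is jointly normal with means (α, 0). If the pre-test acceptance region B ⊂ ℝ for α̂₀ is symmetric about 0 (x ∈ B iff −x ∈ B), and the conditional expectation E[α̂₁ | α̂₀ = x] is of the form α + β x for β = cov(α̂₁,α̂₀)/var(α̂₀), then E[α̂₁ | α̂₀ ∈ B] = α: the DID estimator remains unbiased conditional on passing the pre-test. -/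
/-!
By the defining property of conditional expectation, `∫_{a0 ∈ B} a1 = ∫_{a0 ∈ B} (α + β a0)`.
The centred Gaussian law of `a0` is invariant under `x ↦ -x` and `B` is symmetric, so the slope
term `β ∫_{a0 ∈ B} a0` vanishes and only `α P(a0 ∈ B)` is left.
-/

open MeasureTheory ProbabilityTheory NNReal

section NegInvariant

variable {G E : Type*} [MeasurableSpace G] [AddGroup G] [MeasurableNeg G]
  [NormedAddCommGroup E] [NormedSpace ℝ E] {μ : Measure G} [μ.IsNegInvariant] {f : G → E}

theorem integral_eq_zero_of_odd (hf : f.Odd) : ∫ x, f x ∂μ = 0 := by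
  have h := integral_neg_eq_self f μ
  simp only [hf _, integral_neg] at h
  linear_combination (norm := module) -(1 / 2 : ℝ) • h

theorem setIntegral_eq_zero_of_odd (hf : f.Odd) {B : Set G} (hB : MeasurableSet B)
    (hsym : -B = B) : ∫ x in B, f x ∂μ = 0 := by
  rw [← integral_indicator hB]
  refine integral_eq_zero_of_odd fun x => ?_
  have hmem : -x ∈ B ↔ x ∈ B := by rw [← Set.mem_neg, hsym]
  by_cases hx : x ∈ B
  · simp [hx, hmem.mpr hx, hf x]
  · simp [hx, mt hmem.mp hx]

end NegInvariant

instance gaussianReal_zero_isNegInvariant (v : ℝ≥0) : (gaussianReal 0 v).IsNegInvariant :=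
  ⟨by
    rw [Measure.neg_def, show (Neg.neg : ℝ → ℝ) = fun x => -x from rfl, gaussianReal_map_neg,
      neg_zero]⟩

theorem setIntegral_preimage_eq_of_condExp_eq_affine {Ω : Type*} [MeasurableSpace Ω]
    {P : Measure Ω} [IsFiniteMeasure P] {X Y : Ω → ℝ} {α β : ℝ} (hX : Measurable X)
    (hXi : Integrable X P) (hYi : Integrable Y P) [(P.map X).IsNegInvariant]
    (hcond : P[Y | MeasurableSpace.comap X Real.measurableSpace] =ᵐ[P] fun ω => α + β * X ω)
    {B : Set ℝ} (hB : MeasurableSet B) (hsym : -B = B) :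
    ∫ ω in X ⁻¹' B, Y ω ∂P = P.real (X ⁻¹' B) * α := by
  have hX_zero : ∫ ω in X ⁻¹' B, X ω ∂P = 0 := by
    rw [← setIntegral_map (f := fun x => x) hB aestronglyMeasurable_id hX.aemeasurable]
    exact setIntegral_eq_zero_of_odd (μ := P.map X) (f := fun x => x) (fun _ => rfl) hB hsym
  calc ∫ ω in X ⁻¹' B, Y ω ∂P
      = ∫ ω in X ⁻¹' B, α + β * X ω ∂P := by
        rw [← setIntegral_condExp hX.comap_le hYi ⟨B, hB, rfl⟩]
        exact setIntegral_congr_ae (hX hB) (hcond.mono fun _ h _ => h)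
    _ = P.real (X ⁻¹' B) * α := by
        rw [integral_add (integrable_const α) (hXi.const_mul β).restrict, integral_const_mul,
          hX_zero, setIntegral_const, smul_eq_mul]
        ring

theorem unbiased_conditional_on_pretest_general {Ω : Type*} [MeasurableSpace Ω] (P : Measure Ω)
    [IsProbabilityMeasure P] (a1 a0 : Ω → ℝ) (α β : ℝ) (v : ℝ≥0)
    (hm0 : Measurable a0)
    (hL2a1 : MemLp a1 2 P) (hL2a0 : MemLp a0 2 P)
    (hlaw : P.map a0 = gaussianReal 0 v)
    (hcond : P[a1 | MeasurableSpace.comap a0 Real.measurableSpace]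
      =ᵐ[P] fun ω => α + β * a0 ω)
    (B : Set ℝ) (hB : MeasurableSet B) (hsym : ∀ x, x ∈ B ↔ -x ∈ B)
    (hpos : 0 < P (a0 ⁻¹' B)) :
    ∫ ω, a1 ω ∂(P[|a0 ⁻¹' B]) = α := by
  have : (P.map a0).IsNegInvariant := hlaw ▸ inferInstance
  have hset := setIntegral_preimage_eq_of_condExp_eq_affine hm0 (hL2a0.integrable one_le_two)
    (hL2a1.integrable one_le_two) hcond hB (Set.ext fun x => (hsym x).symm)
  have hreal : P.real (a0 ⁻¹' B) ≠ 0 := (measureReal_ne_zero_iff).mpr hpos.ne'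
  rw [ProbabilityTheory.cond, integral_smul_measure, hset, ENNReal.toReal_inv, ← measureReal_def,
    smul_eq_mul, ← mul_assoc, inv_mul_cancel₀ hreal, one_mul]

/-- Suppose `(α̂₁, α̂₀)` is jointly normal with means `(α, 0)`: `α̂₀` is a centered
normal and the conditional expectation of `α̂₁` given `α̂₀` is linear,
`E[α̂₁ | α̂₀] = α + β α̂₀` with `β = cov(α̂₁, α̂₀)/var(α̂₀)`. If the pre-test acceptance
region `B` is symmetric about `0`, then `E[α̂₁ | α̂₀ ∈ B] = α`: the DID estimator
remains unbiased conditional on passing the pre-test. -/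
theorem unbiased_conditional_on_pretest {Ω : Type*} [MeasurableSpace Ω] (P : Measure Ω)
    [IsProbabilityMeasure P] (a1 a0 : Ω → ℝ) (α β : ℝ) (v : ℝ≥0) (hv : 0 < v)
    (hm1 : Measurable a1) (hm0 : Measurable a0)
    (hL2a1 : MemLp a1 2 P) (hL2a0 : MemLp a0 2 P)
    (hlaw : P.map a0 = gaussianReal 0 v)
    (hβ : β = ((∫ ω, a1 ω * a0 ω ∂P) - (∫ ω, a1 ω ∂P) * (∫ ω, a0 ω ∂P))
      / variance a0 P)
    (hcond : P[a1 | MeasurableSpace.comap a0 Real.measurableSpace]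
      =ᵐ[P] fun ω => α + β * a0 ω)
    (B : Set ℝ) (hB : MeasurableSet B) (hsym : ∀ x, x ∈ B ↔ -x ∈ B)
    (hpos : 0 < P (a0 ⁻¹' B)) :
    ∫ ω, a1 ω ∂(P[|a0 ⁻¹' B]) = α :=
  unbiased_conditional_on_pretest_general P a1 a0 α β v hm0 hL2a1 hL2a0 hlaw hcond B hB hsym hpos
end

section
/- Suppose (α̂₁, α̂₀) is jointly normal with E[α̂₀] = 0, and B is a symmetric convex subset of ℝ (an interval [−b, b]) with P(α̂₀ ∈ B) > 0. Then var(α̂₁ | α̂₀ ∈ B) ≤ var(α̂₁): conditioning on passing the symmetric pre-test weakly reduces the variance of the DID estimator. -/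
open MeasureTheory ProbabilityTheory NNReal

/-!
Write `α̂₁ = μ₁ + β α̂₀ + U`. Conditioning on the event `{α̂₀ ∈ [-b, b]}`, which depends on `α̂₀`
alone, keeps `α̂₀` and `U` independent and leaves the law of `U` unchanged, so both variances
split as `β² var(α̂₀) + var(U)` and it suffices to compare the variances of `α̂₀`. Since
`E[α̂₀] = 0`, `var(α̂₀ | α̂₀ ∈ B) ≤ E[α̂₀² | α̂₀² ≤ b²] ≤ E[α̂₀²] = var(α̂₀)`: on the event `α̂₀²`
lies below `b²` and off it above, so averaging over the event can only lower the mean.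
-/

namespace ProbabilityTheory

variable {Ω : Type*} {mΩ : MeasurableSpace Ω} {μ : Measure Ω}

lemma _root_.MeasureTheory.MemLp.cond {E : Type*} [NormedAddCommGroup E] {f : Ω → E}
    {p : ENNReal} (hf : MemLp f p μ) {t : Set Ω} (ht : μ t ≠ 0) : MemLp f p μ[|t] :=
  (hf.restrict t).smul_measure (ENNReal.inv_ne_top.mpr ht)

lemma HasLaw.memLp {E : Type*} [NormedAddCommGroup E] {mE : MeasurableSpace E}
    [OpensMeasurableSpace E] [SecondCountableTopology E] {X : Ω → E} {ν : Measure E}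
    {p : ENNReal} (hX : HasLaw X ν μ) (h : MemLp id p ν) : MemLp X p μ := by
  rw [← hX.map_eq] at h
  exact (memLp_map_measure_iff aestronglyMeasurable_id hX.aemeasurable).1 h

lemma integral_cond_eq_inv_mul_setIntegral {f : Ω → ℝ} (t : Set Ω) :
    ∫ ω, f ω ∂μ[|t] = (μ.real t)⁻¹ * ∫ ω in t, f ω ∂μ := by
  rw [ProbabilityTheory.cond, integral_smul_measure, smul_eq_mul, ENNReal.toReal_inv,
    measureReal_def]

lemma integral_cond_setOf_le_le_integral [IsProbabilityMeasure μ] {f : Ω → ℝ}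
    (hf : Integrable f μ) (hfm : Measurable f) (c : ℝ) (hc : μ {ω | f ω ≤ c} ≠ 0) :
    ∫ ω, f ω ∂μ[|{ω | f ω ≤ c}] ≤ ∫ ω, f ω ∂μ := by
  set B := {ω | f ω ≤ c}
  have hB : MeasurableSet B := measurableSet_le hfm measurable_const
  set p := μ.real B
  have hp : 0 < p := ENNReal.toReal_pos hc (measure_ne_top μ B)
  have hp1 : p ≤ 1 := measureReal_le_one
  have h_on : ∫ ω in B, f ω ∂μ ≤ c * p := by
    have := setIntegral_mono_on hf.integrableOn
      (integrableOn_const (measure_ne_top μ B) (C := c)) hB fun ω hω ↦ hω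
    simpa [setIntegral_const, mul_comm] using this
  have h_off : c * (1 - p) ≤ ∫ ω in Bᶜ, f ω ∂μ := by
    have := setIntegral_mono_on (integrableOn_const (measure_ne_top μ Bᶜ) (C := c))
      hf.integrableOn hB.compl fun ω hω ↦ le_of_not_ge hω
    simpa [setIntegral_const, mul_comm, probReal_compl_eq_one_sub hB] using this
  rw [integral_cond_eq_inv_mul_setIntegral, inv_mul_le_iff₀ hp, ← integral_add_compl hB hf]
  linarith [mul_le_mul_of_nonneg_left h_on (sub_nonneg.2 hp1),
    mul_le_mul_of_nonneg_left h_off hp.le]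

lemma variance_cond_preimage_Icc_le [IsProbabilityMeasure μ] {X : Ω → ℝ} (hX : MemLp X 2 μ)
    (hXm : Measurable X) (hX0 : μ[X] = 0) {b : ℝ} (hb : 0 ≤ b)
    (hB : μ (X ⁻¹' Set.Icc (-b) b) ≠ 0) :
    Var[X; μ[|X ⁻¹' Set.Icc (-b) b]] ≤ Var[X; μ] := by
  have hB_eq : X ⁻¹' Set.Icc (-b) b = {ω | X ω ^ 2 ≤ b ^ 2} :=
    Set.ext fun ω ↦ ⟨fun h ↦ sq_le_sq' h.1 h.2, fun h ↦ abs_le_of_sq_le_sq' h hb⟩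
  rw [hB_eq] at hB ⊢
  have := cond_isProbabilityMeasure hB
  calc _ ≤ ∫ ω, X ω ^ 2 ∂μ[|{ω | X ω ^ 2 ≤ b ^ 2}] := by
        simpa only [Pi.pow_apply] using variance_le_expectation_sq hXm.aestronglyMeasurable
    _ ≤ ∫ ω, X ω ^ 2 ∂μ :=
        integral_cond_setOf_le_le_integral hX.integrable_sq (hXm.pow_const 2) (b ^ 2) hB
    _ = Var[X; μ] := (variance_of_integral_eq_zero hXm.aemeasurable hX0).symm

lemma variance_const_add_mul_add [IsProbabilityMeasure μ] {X Y : Ω → ℝ} (hX : MemLp X 2 μ)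
    (hY : MemLp Y 2 μ) (hXY : X ⟂ᵢ[μ] Y) (c β : ℝ) :
    Var[fun ω ↦ c + β * X ω + Y ω; μ] = β ^ 2 * Var[X; μ] + Var[Y; μ] := by
  have hβXY : (fun ω ↦ β * X ω) ⟂ᵢ[μ] Y := hXY.comp (measurable_const_mul β) measurable_id
  simp_rw [add_assoc]
  rw [variance_const_add (X := fun ω ↦ β * X ω + Y ω)
    ((hX.const_mul β).add hY).aestronglyMeasurable c, ← variance_const_mul]
  exact hβXY.variance_add (hX.const_mul β) hY

variable {α β : Type*} {mα : MeasurableSpace α} {mβ : MeasurableSpace β}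
  {X : Ω → α} {Y : Ω → β} {s : Set α}

lemma IndepFun.cond_preimage_inter (hXY : X ⟂ᵢ[μ] Y) (hX : Measurable X)
    (hs : MeasurableSet s) {A : Set α} {t : Set β} (hA : MeasurableSet A)
    (ht : MeasurableSet t) :
    μ[X ⁻¹' A ∩ Y ⁻¹' t | X ⁻¹' s] = μ[X ⁻¹' A | X ⁻¹' s] * μ (Y ⁻¹' t) := by
  have hsA : X ⁻¹' s ∩ X ⁻¹' A = X ⁻¹' (s ∩ A) := rfl
  rw [cond_apply (hX hs), cond_apply (hX hs), ← Set.inter_assoc, hsA,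
    hXY.measure_inter_preimage_eq_mul _ _ (hs.inter hA) ht, mul_assoc]

lemma IndepFun.map_cond_preimage [IsProbabilityMeasure μ] (hXY : X ⟂ᵢ[μ] Y)
    (hX : Measurable X) (hY : Measurable Y) (hs : MeasurableSet s) (hs0 : μ (X ⁻¹' s) ≠ 0) :
    (μ[|X ⁻¹' s]).map Y = μ.map Y := by
  have := cond_isProbabilityMeasure hs0
  ext t ht
  rw [Measure.map_apply hY ht, Measure.map_apply hY ht, ← Set.univ_inter (Y ⁻¹' t),
    ← Set.preimage_univ (f := X), hXY.cond_preimage_inter hX hs MeasurableSet.univ ht]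
  simp

lemma IndepFun.cond_preimage [IsProbabilityMeasure μ] (hXY : X ⟂ᵢ[μ] Y) (hX : Measurable X)
    (hY : Measurable Y) (hs : MeasurableSet s) (hs0 : μ (X ⁻¹' s) ≠ 0) :
    X ⟂ᵢ[μ[|X ⁻¹' s]] Y := by
  rw [indepFun_iff_measure_inter_preimage_eq_mul]
  intro A t hA ht
  rw [hXY.cond_preimage_inter hX hs hA ht, ← Measure.map_apply hY ht,
    ← hXY.map_cond_preimage hX hY hs hs0, Measure.map_apply hY ht]

lemma IndepFun.variance_cond_preimage [IsProbabilityMeasure μ] {Y : Ω → ℝ}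
    (hXY : X ⟂ᵢ[μ] Y) (hX : Measurable X) (hY : Measurable Y) (hs : MeasurableSet s)
    (hs0 : μ (X ⁻¹' s) ≠ 0) :
    Var[Y; μ[|X ⁻¹' s]] = Var[Y; μ] := by
  rw [← variance_id_map hY.aemeasurable, hXY.map_cond_preimage hX hY hs hs0,
    variance_id_map hY.aemeasurable]

end ProbabilityTheory

theorem variance_reduction_conditional_on_pretest_general {Ω : Type*} [MeasurableSpace Ω]
    (P : Measure Ω) [IsProbabilityMeasure P]
    (a0 U a1 : Ω → ℝ) (μ1 β b : ℝ) (hb : 0 < b) (v w : ℝ≥0)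
    (hm0 : Measurable a0) (hmU : Measurable U)
    (hlaw0 : P.map a0 = gaussianReal 0 v) (hlawU : P.map U = gaussianReal 0 w)
    (hindep : IndepFun a0 U P)
    (ha1 : ∀ ω, a1 ω = μ1 + β * a0 ω + U ω)
    (hpos : 0 < P (a0 ⁻¹' Set.Icc (-b) b)) :
    variance a1 (P[|a0 ⁻¹' Set.Icc (-b) b]) ≤ variance a1 P := by
  have hB := hpos.ne'
  have := cond_isProbabilityMeasure hB
  have ha0_law : HasLaw a0 (gaussianReal 0 v) P := ⟨hm0.aemeasurable, hlaw0⟩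
  have ha0 : MemLp a0 2 P := ha0_law.memLp (memLp_id_gaussianReal 2)
  have hU : MemLp U 2 P := HasLaw.memLp ⟨hmU.aemeasurable, hlawU⟩ (memLp_id_gaussianReal 2)
  have hmean : P[a0] = 0 := by rw [ha0_law.integral_eq, integral_id_gaussianReal]
  rw [show a1 = fun ω ↦ μ1 + β * a0 ω + U ω from funext ha1,
    variance_const_add_mul_add ha0 hU hindep,
    variance_const_add_mul_add (ha0.cond hB) (hU.cond hB)
      (hindep.cond_preimage hm0 hmU measurableSet_Icc hB),
    hindep.variance_cond_preimage hm0 hmU measurableSet_Icc hB]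
  gcongr
  exact variance_cond_preimage_Icc_le ha0 hm0 hmean hb.le hB

/-- Suppose `(α̂₁, α̂₀)` is jointly normal with `E[α̂₀] = 0` (written as
`α̂₁ = μ₁ + β α̂₀ + U` with `U` a centered normal independent of the centered normal
`α̂₀`), and `B = [-b, b]` with `b > 0`. Then
`var(α̂₁ | α̂₀ ∈ B) ≤ var(α̂₁)`: conditioning on passing the symmetric pre-test weakly
reduces the variance of the DID estimator. -/
theorem variance_reduction_conditional_on_pretest {Ω : Type*} [MeasurableSpace Ω]
    (P : Measure Ω) [IsProbabilityMeasure P]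
    (a0 U a1 : Ω → ℝ) (μ1 β b : ℝ) (hb : 0 < b) (v w : ℝ≥0) (hv : 0 < v)
    (hm0 : Measurable a0) (hmU : Measurable U)
    (hlaw0 : P.map a0 = gaussianReal 0 v) (hlawU : P.map U = gaussianReal 0 w)
    (hindep : IndepFun a0 U P)
    (ha1 : ∀ ω, a1 ω = μ1 + β * a0 ω + U ω)
    (hpos : 0 < P (a0 ⁻¹' Set.Icc (-b) b)) :
    variance a1 (P[|a0 ⁻¹' Set.Icc (-b) b]) ≤ variance a1 P :=
  variance_reduction_conditional_on_pretest_general P a0 U a1 μ1 β b hb v w hm0 hmU hlaw0 hlawU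
    hindep ha1 hpos
end

section
/- If Z ~ N(0, σ²) with σ² > 0 and b > 0, then var(Z | |Z| ≤ b) ≤ σ², i.e., truncating a centered normal to a symmetric interval about zero weakly decreases its variance. -/
open MeasureTheory ProbabilityTheory NNReal

/-! The conditional variance is at most the conditional second moment. Conditioning on `|Z| ≤ b`
keeps exactly the outcomes where `Z²` lies below the level `b²`; since the average of `Z²` there
is at most `b²` and off it at least `b²`, the conditional second moment is at most the
unconditional one, `σ²`. -/

section Truncation

variable {Ω : Type*} [MeasurableSpace Ω] {μ : Measure Ω} [IsProbabilityMeasure μ]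
  {f : Ω → ℝ} {s : Set Ω} {c : ℝ}

lemma setIntegral_le_measureReal_mul_integral_of_le_of_ge (hs : MeasurableSet s)
    (hf : Integrable f μ) (h_le : ∀ ω ∈ s, f ω ≤ c) (h_ge : ∀ ω ∉ s, c ≤ f ω) :
    ∫ ω in s, f ω ∂μ ≤ μ.real s * ∫ ω, f ω ∂μ := by
  have h_in : ∫ ω in s, f ω ∂μ ≤ c * μ.real s := by
    calc ∫ ω in s, f ω ∂μ ≤ ∫ _ in s, c ∂μ :=
          setIntegral_mono_on hf.integrableOn (integrableOn_const (measure_ne_top μ s)) hs h_le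
      _ = c * μ.real s := by rw [setIntegral_const, smul_eq_mul, mul_comm]
  have h_out : c * μ.real sᶜ ≤ ∫ ω in sᶜ, f ω ∂μ :=
    setIntegral_ge_of_const_le_real hs.compl (measure_ne_top μ _) h_ge hf.integrableOn
  have h_total : μ.real s + μ.real sᶜ = 1 := probReal_add_probReal_compl hs
  have h_cross : (∫ ω in s, f ω ∂μ) * μ.real sᶜ ≤ μ.real s * ∫ ω in sᶜ, f ω ∂μ := by
    calc (∫ ω in s, f ω ∂μ) * μ.real sᶜ ≤ c * μ.real s * μ.real sᶜ := by gcongr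
      _ = μ.real s * (c * μ.real sᶜ) := by ring
      _ ≤ μ.real s * ∫ ω in sᶜ, f ω ∂μ := by gcongr
  rw [← integral_add_compl hs hf]
  linear_combination h_cross - (∫ ω in s, f ω ∂μ) * h_total

lemma integral_cond_le_integral_of_le_of_ge (hs : MeasurableSet s) (hμs : μ s ≠ 0)
    (hf : Integrable f μ) (h_le : ∀ ω ∈ s, f ω ≤ c) (h_ge : ∀ ω ∉ s, c ≤ f ω) :
    ∫ ω, f ω ∂μ[|s] ≤ ∫ ω, f ω ∂μ := by
  have hμs_pos : 0 < μ.real s := ENNReal.toReal_pos hμs (measure_ne_top μ s)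
  rw [ProbabilityTheory.cond, integral_smul_measure, ENNReal.toReal_inv, smul_eq_mul,
    ← measureReal_def, inv_mul_le_iff₀ hμs_pos]
  exact setIntegral_le_measureReal_mul_integral_of_le_of_ge hs hf h_le h_ge

end Truncation

lemma integral_sq_gaussianReal (m : ℝ) (v : ℝ≥0) :
    ∫ x, x ^ 2 ∂gaussianReal m v = v + m ^ 2 := by
  have h := variance_eq_sub (memLp_id_gaussianReal (μ := m) (v := v) 2)
  simp only [variance_id_gaussianReal, Pi.pow_apply, id_eq, integral_id_gaussianReal] at h
  linarith

section GaussianLaw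

variable {Ω : Type*} [MeasurableSpace Ω] {P : Measure Ω} {Z : Ω → ℝ} {m : ℝ} {v : ℝ≥0}

lemma integrable_sq_of_map_eq_gaussianReal (hZ : Measurable Z)
    (hlaw : P.map Z = gaussianReal m v) : Integrable (fun ω => Z ω ^ 2) P := by
  have hZ2 : MemLp (id ∘ Z) 2 P :=
    (hlaw ▸ memLp_id_gaussianReal 2 : MemLp id 2 (P.map Z)).comp_of_map hZ.aemeasurable
  exact hZ2.integrable_sq

lemma integral_sq_of_map_eq_gaussianReal (hZ : Measurable Z)
    (hlaw : P.map Z = gaussianReal m v) : ∫ ω, Z ω ^ 2 ∂P = v + m ^ 2 := by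
  rw [← integral_sq_gaussianReal, ← hlaw, integral_map hZ.aemeasurable (by fun_prop)]

end GaussianLaw

theorem variance_truncated_gaussian_le_general {Ω : Type*} [MeasurableSpace Ω] (P : Measure Ω)
    [IsProbabilityMeasure P] (Z : Ω → ℝ) (hm : Measurable Z) (v : ℝ≥0)
    (hlaw : P.map Z = gaussianReal 0 v) (b : ℝ) (hb : 0 < b)
    (hpos : 0 < P {ω | |Z ω| ≤ b}) :
    variance Z (P[|{ω | |Z ω| ≤ b}]) ≤ (v : ℝ) := by
  set A := {ω | |Z ω| ≤ b}
  have hA : MeasurableSet A := measurableSet_le hm.abs measurable_const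
  have : IsProbabilityMeasure P[|A] := cond_isProbabilityMeasure hpos.ne'
  have h_in : ∀ ω ∈ A, Z ω ^ 2 ≤ b ^ 2 := fun ω hω => sq_le_sq' (abs_le.mp hω).1 (abs_le.mp hω).2
  have h_out : ∀ ω ∉ A, b ^ 2 ≤ Z ω ^ 2 := fun ω hω =>
    sq_le_sq.mpr (by rw [abs_of_pos hb]; exact (not_le.mp hω).le)
  calc variance Z P[|A] ≤ ∫ ω, Z ω ^ 2 ∂P[|A] :=
        variance_le_expectation_sq hm.aestronglyMeasurable
    _ ≤ ∫ ω, Z ω ^ 2 ∂P := integral_cond_le_integral_of_le_of_ge hA hpos.ne'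
          (integrable_sq_of_map_eq_gaussianReal hm hlaw) h_in h_out
    _ = v := by rw [integral_sq_of_map_eq_gaussianReal hm hlaw]; ring

/-- If `Z ~ N(0, σ²)` with `σ² > 0` and `b > 0`, then `var(Z | |Z| ≤ b) ≤ σ²`:
truncating a centered normal to a symmetric interval about zero weakly decreases its
variance. -/
theorem variance_truncated_gaussian_le {Ω : Type*} [MeasurableSpace Ω] (P : Measure Ω)
    [IsProbabilityMeasure P] (Z : Ω → ℝ) (hm : Measurable Z) (v : ℝ≥0) (hv : 0 < v)
    (hlaw : P.map Z = gaussianReal 0 v) (b : ℝ) (hb : 0 < b)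
    (hpos : 0 < P {ω | |Z ω| ≤ b}) :
    variance Z (P[|{ω | |Z ω| ≤ b}]) ≤ (v : ℝ) :=
  variance_truncated_gaussian_le_general P Z hm v hlaw b hb hpos
end
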